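/- arXiv:2011.05724 — 3 statements merged into one kernel-verified Lean document; each statement's English description precedes it below -/
import Mathlib

section
/- Let V ⊆ V' be an extension of valuation rings with fraction fields K ⊆ K', maximal ideal m of V, and residue field extension k ⊆ k'. Let x₁,…,x_n ∈ V' be elements whose residues in k' are algebraically independent over k. Then x₁,…,x_n are algebraically independent over K, and the valuation ring V' ∩ K(x₁,…,x_n) equals the localization of the polynomial subring V[x₁,…,x_n] at the prime ideal m·V[x₁,…,x_n]; in particular V' ∩ K(x₁,…,x_n) is isomorphic to the localization V[X₁,…,X_n]_{mV[X₁,…,X_n]} of a polynomial ring over V and is ind-smooth over V. -/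
universe u v

/-- A ring homomorphism `f : A →+* B` is *ind-smooth* if `B` is a filtered colimit of smooth
`A`-algebras; equivalently (and this is the definition used here), every `A`-algebra homomorphism
`E → B` from a finitely presented `A`-algebra `E` factors through a smooth (i.e. finitely
presented and formally smooth) `A`-algebra. -/
def RingHom.IsIndSmooth {A : Type u} {B : Type v} [CommRing A] [CommRing B]
    (f : A →+* B) : Prop :=
  ∀ (E : Type u) [CommRing E] [Algebra A E], Algebra.FinitePresentation A E →
    ∀ w : E →+* B, w.comp (algebraMap A E) = f →
      ∃ (S : Type u) (_ : CommRing S) (_ : Algebra A S), Algebra.Smooth A S ∧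
        ∃ (g : E →ₐ[A] S) (h : S →+* B),
          h.comp g.toRingHom = w ∧ h.comp (algebraMap A S) = f

/-- The value group extension of an extension `f : V → V'` of valuation rings is *trivial* if
every nonzero element `x/y` of the fraction field of `V'` is, up to a unit of `V'`, of the form
`a/b` with `a, b` nonzero in `V`. -/
def RingHom.HasTrivialValueGroupExt {V : Type u} {V' : Type v} [CommRing V] [CommRing V']
    (f : V →+* V') : Prop :=
  ∀ x y : V', x ≠ 0 → y ≠ 0 → ∃ a b : V, a ≠ 0 ∧ b ≠ 0 ∧ Associated (x * f b) (y * f a)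

/-! Over a valuation ring `V` every polynomial is `C c * q` with `q` having a coefficient `1`,
so `q ∉ m·V[X]`, and algebraic independence of the residues makes `q(x)` a unit of `V'`. Hence
`aeval x` is injective, and if `z ∈ V'` satisfies `z · b q(x) = a p(x)` with `p, q ∉ m·V[X]`,
then `b ∣ a` in `V'`, hence in `V` since `V → V'` is local and injective; so `z = t p(x) / q(x)`
with `t = a / b ∈ V`. Thus `V' ∩ K(x)` is the localization of `V[X]` at `m·V[X]`. That is the
union of the smooth `V`-algebras `V[X][1/q]`, and a finitely presented algebra mapping into it
lands in one of them. -/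

open MvPolynomial IsLocalRing

theorem ValuationRing.exists_mem_forall_dvd {ι R : Type*} [Monoid R] [PreValuationRing R]
    {s : Finset ι} (hs : s.Nonempty) (f : ι → R) : ∃ i ∈ s, ∀ j ∈ s, f i ∣ f j := by
  induction hs using Finset.Nonempty.cons_induction with
  | singleton a => exact ⟨a, by simp⟩
  | cons a s _ _ ih =>
    obtain ⟨i, hi, hmin⟩ := ih
    rcases ValuationRing.dvd_total (f a) (f i) with h | h
    · exact ⟨a, by simp, by simpa using fun j hj => h.trans (hmin j hj)⟩
    · exact ⟨i, by simp [hi], by simpa [h] using hmin⟩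

theorem ValuationRing.dvd_of_map_dvd {R S : Type*} [CommRing R] [IsDomain R] [ValuationRing R]
    [CommRing S] [IsDomain S] (f : R →+* S) [IsLocalHom f] (hf : Function.Injective f)
    {a b : R} (h : f a ∣ f b) : a ∣ b := by
  rcases ValuationRing.dvd_total a b with hab | ⟨t, rfl⟩
  · exact hab
  rcases eq_or_ne b 0 with rfl | hb
  · exact dvd_zero _
  obtain ⟨s, hs⟩ := h
  have ht : IsUnit (f t) := .of_mul_eq_one s <| mul_left_cancel₀
    ((map_ne_zero_iff f hf).mpr hb) (by rw [mul_one, ← mul_assoc, ← map_mul, ← hs])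
  exact (IsUnit.mul_right_dvd (isUnit_of_map_unit f t ht)).mpr dvd_rfl

namespace MvPolynomial

variable {σ R : Type*} [CommRing R]

instance isPrime_map_C (I : Ideal R) [I.IsPrime] :
    (I.map (C : R →+* MvPolynomial σ R)).IsPrime := by
  rw [← Ideal.mk_ker (I := I), ← ker_map]
  exact RingHom.ker_isPrime _

theorem exists_eq_C_mul_notMem_map_maximalIdeal [IsDomain R] [ValuationRing R]
    (p : MvPolynomial σ R) :
    ∃ c q, q ∉ (maximalIdeal R).map (C : R →+* MvPolynomial σ R) ∧ p = C c * q := by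
  have notMem_of_coeff_eq_one (q : MvPolynomial σ R) (d : σ →₀ ℕ) (hd : q.coeff d = 1) :
      q ∉ (maximalIdeal R).map C := fun hq =>
    notMem_maximalIdeal.mpr isUnit_one (hd ▸ mem_map_C_iff.mp hq d)
  rcases eq_or_ne p 0 with rfl | hp
  · exact ⟨0, 1, notMem_of_coeff_eq_one 1 0 coeff_zero_one, by simp⟩
  obtain ⟨d, hd, hmin⟩ := ValuationRing.exists_mem_forall_dvd (support_nonempty.mpr hp) p.coeff
  obtain ⟨q, hq⟩ := (C_dvd_iff_dvd_coeff (p.coeff d) p).mpr fun m => by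
    by_cases hm : m ∈ p.support
    exacts [hmin m hm, by simp [notMem_support_iff.mp hm]]
  refine ⟨p.coeff d, q, notMem_of_coeff_eq_one q d ?_, hq⟩
  have hcoeff := congrArg (coeff d) hq
  rw [coeff_C_mul] at hcoeff
  exact (mul_eq_left₀ (mem_support_iff.mp hd)).mp hcoeff.symm

theorem exists_map_eq_C_mul {S : Type*} [CommRing S] [Algebra R S] (M : Submonoid R)
    [IsLocalization M S] (r : MvPolynomial σ S) :
    ∃ p : MvPolynomial σ R, ∃ d ∈ M, map (algebraMap R S) p = C (algebraMap R S d) * r := by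
  let := algebraMvPolynomial (σ := σ) (R := R) (S := S)
  obtain ⟨⟨p, ⟨_, d, hd, rfl⟩⟩, h⟩ :=
    IsLocalization.surj (M.map (C : R →+* MvPolynomial σ R)) (S := MvPolynomial σ S) r
  exact ⟨p, d, hd, by rw [← algebraMap_def, ← h, mul_comm]; simp⟩

end MvPolynomial

theorem AlgebraicIndependent.of_isLocalization {σ R S L : Type*} [CommRing R] [CommRing S]
    [CommRing L] [Algebra R S] (M : Submonoid R) [IsLocalization M S] [Algebra S L] [Algebra R L]
    [IsScalarTower R S L] {y : σ → L} (hy : AlgebraicIndependent R y) :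
    AlgebraicIndependent S y := by
  refine algebraicIndependent_iff.mpr fun r hr => ?_
  obtain ⟨p, d, hd, hp⟩ := exists_map_eq_C_mul M r
  have hp0 : aeval y p = 0 := by rw [← aeval_map_algebraMap S, hp, map_mul, hr, mul_zero]
  rw [algebraicIndependent_iff.mp hy p hp0, map_zero] at hp
  exact (((IsLocalization.map_units S ⟨d, hd⟩).map C).mul_right_eq_zero).mp hp.symm

theorem IntermediateField.mem_adjoin_range_iff_exists_mul_aeval_eq {σ R K L : Type*} [CommRing R]
    [IsDomain R] [Field K] [Field L] [Algebra R K] [IsFractionRing R K] [Algebra K L]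
    [Algebra R L] [IsScalarTower R K L] (y : σ → L) (z : L) :
    z ∈ adjoin K (Set.range y) ↔
      ∃ p q : MvPolynomial σ R, aeval y q ≠ 0 ∧ z * aeval y q = aeval y p := by
  have hinj : Function.Injective (algebraMap R L) := by
    rw [IsScalarTower.algebraMap_eq R K L]
    exact (algebraMap K L).injective.comp (IsFractionRing.injective R K)
  have aeval_clear (r : MvPolynomial σ K) :
      ∃ (p : MvPolynomial σ R) (d : R), d ≠ 0 ∧
        aeval y p = algebraMap R L d * aeval y r := by
    obtain ⟨p, d, hd, hp⟩ := exists_map_eq_C_mul (nonZeroDivisors R) r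
    refine ⟨p, d, nonZeroDivisors.ne_zero hd, ?_⟩
    rw [← aeval_map_algebraMap K, hp, map_mul, aeval_C, ← IsScalarTower.algebraMap_apply]
  rw [mem_adjoin_range_iff]
  constructor
  · rintro ⟨r, s, rfl⟩
    rcases eq_or_ne (aeval y s) 0 with hs | hs
    · exact ⟨0, 1, by simp, by simp [hs]⟩
    obtain ⟨p, d, hd, hp⟩ := aeval_clear r
    obtain ⟨q, e, he, hq⟩ := aeval_clear s
    have hd' := (map_ne_zero_iff _ hinj).mpr hd
    have he' := (map_ne_zero_iff _ hinj).mpr he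
    refine ⟨C e * p, C d * q, ?_, ?_⟩
    · simp [hq, hd', he', hs]
    · simp only [map_mul, aeval_C, hp, hq]
      field_simp
  · rintro ⟨p, q, hq, h⟩
    refine ⟨MvPolynomial.map (algebraMap R K) p, MvPolynomial.map (algebraMap R K) q, ?_⟩
    rw [aeval_map_algebraMap, aeval_map_algebraMap, eq_div_iff hq, h]

section ResiduallyTranscendental

variable {σ V V' : Type*} [CommRing V] [IsLocalRing V] [CommRing V']
  [IsLocalRing V'] [Algebra V V'] [IsLocalHom (algebraMap V V')] {x : σ → V'}

theorem residue_aeval (q : MvPolynomial σ V) :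
    residue V' (aeval x q) = aeval (residue V' ∘ x) (map (residue V) q) := by
  rw [aeval_def, aeval_def, eval₂_comp_left, eval₂_map]
  rfl

theorem isUnit_aeval_of_notMem_map_maximalIdeal
    (hx : AlgebraicIndependent (ResidueField V) (residue V' ∘ x)) {q : MvPolynomial σ V}
    (hq : q ∉ (maximalIdeal V).map C) : IsUnit (aeval x q) := by
  rw [← ker_residue, ← ker_map, RingHom.mem_ker] at hq
  rw [← notMem_maximalIdeal, ← residue_eq_zero_iff, residue_aeval]
  exact fun h => hq (algebraicIndependent_iff.mp hx _ h)

end ResiduallyTranscendental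

section ValuationRing

variable {σ V V' : Type*} [CommRing V] [IsDomain V] [ValuationRing V]
  [CommRing V'] [IsLocalRing V'] [Algebra V V'] [IsLocalHom (algebraMap V V')] {x : σ → V'}
  (hinj : Function.Injective (algebraMap V V'))
  (hx : AlgebraicIndependent (ResidueField V) (residue V' ∘ x))
include hinj hx

theorem algebraicIndependent_of_residue : AlgebraicIndependent V x := by
  refine algebraicIndependent_iff.mpr fun p hp => ?_
  obtain ⟨c, q, hq, rfl⟩ := exists_eq_C_mul_notMem_map_maximalIdeal p
  rw [map_mul, aeval_C, (isUnit_aeval_of_notMem_map_maximalIdeal hx hq).mul_left_eq_zero] at hp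
  rw [(map_eq_zero_iff _ hinj).mp hp, C_0, zero_mul]

theorem exists_notMem_map_maximalIdeal_of_mul_aeval_eq [IsDomain V'] {z : V'} {p q : MvPolynomial σ V}
    (hq : aeval x q ≠ 0) (h : z * aeval x q = aeval x p) :
    ∃ p' q' : MvPolynomial σ V,
      q' ∉ (maximalIdeal V).map C ∧ z * aeval x q' = aeval x p' := by
  obtain ⟨b, q, hq', rfl⟩ := exists_eq_C_mul_notMem_map_maximalIdeal q
  obtain ⟨a, p, hp', rfl⟩ := exists_eq_C_mul_notMem_map_maximalIdeal p
  simp only [map_mul, aeval_C] at hq h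
  obtain ⟨t, rfl⟩ : b ∣ a := ValuationRing.dvd_of_map_dvd (algebraMap V V') hinj <|
    (isUnit_aeval_of_notMem_map_maximalIdeal hx hp').dvd_mul_right.mp
      (show algebraMap V V' b ∣ algebraMap V V' a * aeval x p from
        ⟨z * aeval x q, by rw [← h]; ring⟩)
  refine ⟨C t * p, q, hq', mul_left_cancel₀ (left_ne_zero_of_mul hq) ?_⟩
  simp only [map_mul, aeval_C] at h ⊢
  linear_combination h

end ValuationRing

section FractionField

variable {σ V V' : Type*} [CommRing V] [IsDomain V] [ValuationRing V]
  [CommRing V'] [IsLocalRing V'] [Algebra V V'] [IsLocalHom (algebraMap V V')]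
  {K K' : Type*} [Field K] [Field K'] [Algebra V K] [IsFractionRing V K]
  [Algebra V' K'] [IsFractionRing V' K'] [Algebra K K'] [Algebra V K'] [IsScalarTower V K K']
  [IsScalarTower V V' K'] {x : σ → V'} (hinj : Function.Injective (algebraMap V V'))
  (hx : AlgebraicIndependent (ResidueField V) (residue V' ∘ x))
include hinj hx

theorem injective_aeval_algebraMap_comp_of_residue :
    Function.Injective (aeval fun i => algebraMap V' K' (x i) : MvPolynomial σ V →ₐ[V] K') :=
  algebraicIndependent_iff_injective_aeval.mp <| (algebraicIndependent_of_residue hinj hx).map'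
    (f := IsScalarTower.toAlgHom V V' K') (IsFractionRing.injective V' K')

theorem algebraicIndependent_algebraMap_comp_of_residue :
    AlgebraicIndependent K fun i => algebraMap V' K' (x i) :=
  (algebraicIndependent_iff_injective_aeval.mpr
    (injective_aeval_algebraMap_comp_of_residue hinj hx)).of_isLocalization (nonZeroDivisors V)

theorem exists_algebraMap_eq_and_mem_adjoin_iff [IsDomain V'] (z : K') :
    ((∃ v' : V', algebraMap V' K' v' = z) ∧
        z ∈ IntermediateField.adjoin K (Set.range fun i => algebraMap V' K' (x i))) ↔
      ∃ p q : MvPolynomial σ V, q ∉ (maximalIdeal V).map C ∧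
        z * aeval (fun i => algebraMap V' K' (x i)) q =
          aeval (fun i => algebraMap V' K' (x i)) p := by
  have hφ (p : MvPolynomial σ V) :
      aeval (fun i => algebraMap V' K' (x i)) p = algebraMap V' K' (aeval x p) :=
    aeval_algebraMap_apply K' x p
  have hinj' := IsFractionRing.injective V' K'
  rw [IntermediateField.mem_adjoin_range_iff_exists_mul_aeval_eq (R := V)]
  constructor
  · rintro ⟨⟨v', rfl⟩, p, q, hq, h⟩
    simp only [hφ, ← map_mul, hinj'.eq_iff, ne_eq, map_eq_zero_iff _ hinj'] at hq h ⊢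
    exact exists_notMem_map_maximalIdeal_of_mul_aeval_eq hinj hx hq h
  · rintro ⟨p, q, hq, h⟩
    have hu := isUnit_aeval_of_notMem_map_maximalIdeal hx hq
    have hq0 : aeval (fun i => algebraMap V' K' (x i)) q ≠ 0 := by
      rw [hφ]; exact (map_ne_zero_iff _ hinj').mpr hu.ne_zero
    refine ⟨⟨aeval x p * ↑hu.unit⁻¹, ?_⟩, p, q, hq0, h⟩
    rw [map_mul, map_units_inv, IsUnit.unit_spec, ← hφ, ← hφ, ← div_eq_mul_inv, div_eq_iff hq0,
      h]

end FractionField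

theorem IsLocalization.of_forall_mem_iff {A L : Type*} [CommRing A] [Field L] {M : Submonoid A}
    {B : Subring L} [Algebra A B] (hM : 0 ∉ M)
    (hinj : Function.Injective fun a => (algebraMap A B a : L))
    (hB : ∀ z : L, z ∈ B ↔ ∃ a, ∃ m ∈ M, z * algebraMap A B m = algebraMap A B a) :
    IsLocalization M B := by
  have hne (m : M) : (algebraMap A B m : L) ≠ 0 := fun h => by
    have hm0 : (m : A) = 0 := hinj (by simpa using h)
    exact hM (hm0 ▸ m.2)
  refine (isLocalization_iff M B).mpr
    ⟨fun m => ?_, fun z => ?_, fun h => ⟨1, by rw [hinj (congrArg _ h)]⟩⟩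
  · have hinv : (algebraMap A B m : L)⁻¹ ∈ B := (hB _).mpr ⟨1, m, m.2, by simp [hne m]⟩
    exact .of_mul_eq_one ⟨_, hinv⟩ (Subtype.ext (mul_inv_cancel₀ (hne m)))
  · obtain ⟨a, m, hm, h⟩ := (hB z).mp z.2
    exact ⟨(a, ⟨m, hm⟩), Subtype.ext h⟩

theorem AlgHom.exists_comp_eq_of_range_le {R S E B : Type*} [CommRing R] [CommRing S] [CommRing E]
    [CommRing B] [Algebra R S] [Algebra R E] [Algebra R B] {f : S →ₐ[R] B}
    (hf : Function.Injective f) {w : E →ₐ[R] B} (h : w.range ≤ f.range) :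
    ∃ g : E →ₐ[R] S, f.comp g = w :=
  ⟨(AlgEquiv.ofInjective f hf).symm.toAlgHom.comp (w.codRestrict f.range fun e => h ⟨e, rfl⟩),
    AlgHom.ext fun _ => congrArg Subtype.val ((AlgEquiv.ofInjective f hf).apply_symm_apply _)⟩

theorem RingHom.IsIndSmooth.of_isLocalization {R A : Type u} {B : Type v} [CommRing R]
    [CommRing A] [CommRing B] [Algebra R A] [Algebra.Smooth R A] [Algebra A B] (M : Submonoid A)
    (hM : M ≤ nonZeroDivisors A) [IsLocalization M B] :
    ((algebraMap A B).comp (algebraMap R A)).IsIndSmooth := by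
  classical
  let : Algebra R B := ((algebraMap A B).comp (algebraMap R A)).toAlgebra
  have : IsScalarTower R A B := .of_algebraMap_eq' rfl
  intro E _ _ hE w hw
  let w' : E →ₐ[R] B := { w with commutes' := fun r => congr($hw r) }
  obtain ⟨t, ht⟩ := Algebra.FiniteType.out (R := R) (A := E)
  -- a common denominator `s` of the images of the generators of `E`: `w` lands in `A[1/s]`
  obtain ⟨⟨s, hs⟩, hint⟩ := IsLocalization.exist_integer_multiples_of_finset M (t.image w)
  let S := Localization.Away s
  have : Algebra.Smooth A S := .of_isLocalization_Away s
  have hsM : Submonoid.powers s ≤ M := Submonoid.powers_le.mpr hs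
  have hunit (y : Submonoid.powers s) : IsUnit (IsScalarTower.toAlgHom R A B y) :=
    IsLocalization.map_units B (⟨y, hsM y.2⟩ : M)
  set ℓ : S →ₐ[R] B := IsLocalization.liftAlgHom hunit with hℓ_def
  have hℓ : Function.Injective ℓ := by
    rw [hℓ_def, IsLocalization.coe_liftAlgHom, IsLocalization.lift_injective_iff]
    intro a b
    rw [(IsLocalization.injective S (hsM.trans hM)).eq_iff]
    exact (IsLocalization.injective B hM).eq_iff.symm
  have hrange : w'.range ≤ ℓ.range := by
    rw [← Algebra.map_top, ← ht, AlgHom.map_adjoin, Algebra.adjoin_le_iff]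
    rintro _ ⟨e, he, rfl⟩
    obtain ⟨a, ha⟩ := hint (w e) (Finset.mem_image_of_mem w he)
    refine ⟨IsLocalization.mk' S a (⟨s, Submonoid.mem_powers s⟩ : Submonoid.powers s), ?_⟩
    rw [AlgHom.toRingHom_eq_coe, RingHom.coe_coe, hℓ_def, IsLocalization.liftAlgHom_apply,
      IsLocalization.lift_mk'_spec]
    exact ha.trans (Algebra.smul_def _ _)
  obtain ⟨g, hg⟩ := AlgHom.exists_comp_eq_of_range_le hℓ hrange
  exact ⟨S, _, _, .comp R A S, g, ℓ, congrArg AlgHom.toRingHom hg, ℓ.comp_algebraMap⟩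

/-- Let `V ⊆ V'` be an extension of valuation rings with fraction fields
`K ⊆ K'`, maximal ideal `m` of `V` and residue field extension `k ⊆ k'`.  If `x₁,…,x_n ∈ V'`
have residues in `k'` algebraically independent over `k`, then the `x_i` are algebraically
independent over `K`, the ring `V' ∩ K(x₁,…,x_n)` is the localization of `V[x₁,…,x_n]` at
`m·V[x₁,…,x_n]` (so it is isomorphic to `V[X₁,…,X_n]_{m·V[X₁,…,X_n]}`), and it is ind-smooth
over `V`. -/
theorem intersection_adjoin_residue_transcendental
    (V : Type u) (V' : Type v) [CommRing V] [IsDomain V] [ValuationRing V]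
    [CommRing V'] [IsDomain V'] [ValuationRing V'] [Algebra V V']
    (hinj : Function.Injective (algebraMap V V'))
    [IsLocalHom (algebraMap V V')]
    (K : Type u) (K' : Type v) [Field K] [Field K']
    [Algebra V K] [IsFractionRing V K] [Algebra V' K'] [IsFractionRing V' K']
    [Algebra K K'] [Algebra V K'] [IsScalarTower V K K'] [IsScalarTower V V' K']
    (n : ℕ) (x : Fin n → V')
    (hx : haveI := (IsLocalRing.ResidueField.map (algebraMap V V')).toAlgebra
      AlgebraicIndependent (IsLocalRing.ResidueField V)
        fun i => IsLocalRing.residue V' (x i)) :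
    letI F : IntermediateField K K' :=
      IntermediateField.adjoin K (Set.range fun i => algebraMap V' K' (x i))
    letI W : Subring K' := (algebraMap V' K').range ⊓ F.toSubring
    letI ρ : V →+* W := (algebraMap V K').codRestrict W (fun v =>
      Subring.mem_inf.mpr
        ⟨⟨algebraMap V V' v, (IsScalarTower.algebraMap_apply V V' K' v).symm⟩,
          by rw [IsScalarTower.algebraMap_apply V K K']; exact F.algebraMap_mem _⟩)
    letI P : Ideal (MvPolynomial (Fin n) V) :=
      (IsLocalRing.maximalIdeal V).map (MvPolynomial.C)
    letI φ : MvPolynomial (Fin n) V →ₐ[V] K' :=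
      MvPolynomial.aeval fun i => algebraMap V' K' (x i)
    -- the `xᵢ` are algebraically independent over `K`
    (AlgebraicIndependent K fun i => algebraMap V' K' (x i)) ∧
    -- `V' ∩ K(x₁,…,x_n)` equals the localization of `V[x₁,…,x_n]` at `m·V[x₁,…,x_n]`,
    -- as subrings of `K'`
    (∀ z : K', ((∃ v' : V', algebraMap V' K' v' = z) ∧ z ∈ F) ↔
      ∃ p q : MvPolynomial (Fin n) V, q ∉ P ∧ z * φ q = φ p) ∧
    -- in particular it is isomorphic to `V[X₁,…,X_n]_{m·V[X₁,…,X_n]}` …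
    (∃ hP : P.IsPrime, Nonempty (W ≃+* Localization (@Ideal.primeCompl _ _ P hP))) ∧
    -- … and ind-smooth over `V`
    ρ.IsIndSmooth := by
  set P := (maximalIdeal V).map (C : V →+* MvPolynomial (Fin n) V)
  set φ : MvPolynomial (Fin n) V →ₐ[V] K' := aeval fun i => algebraMap V' K' (x i)
  set W := (algebraMap V' K').range ⊓
    (IntermediateField.adjoin K (Set.range fun i => algebraMap V' K' (x i))).toSubring
  have hmem : ∀ z, z ∈ W ↔ ∃ p q, q ∉ P ∧ z * φ q = φ p :=
    exists_algebraMap_eq_and_mem_adjoin_iff hinj hx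
  let : Algebra (MvPolynomial (Fin n) V) W := (φ.toRingHom.codRestrict W fun p =>
    (hmem _).mpr ⟨p, 1, (Ideal.ne_top_iff_one P).mp Ideal.IsPrime.ne_top', by simp⟩).toAlgebra
  have : IsLocalization P.primeCompl W := .of_forall_mem_iff (fun h => h P.zero_mem)
    (injective_aeval_algebraMap_comp_of_residue hinj hx) hmem
  refine ⟨algebraicIndependent_algebraMap_comp_of_residue hinj hx, hmem,
    ⟨inferInstance, ⟨(IsLocalization.algEquiv P.primeCompl W _).toRingEquiv⟩⟩, ?_⟩
  have : Algebra.Smooth V (MvPolynomial (Fin n) V) := {}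
  have hsmooth := RingHom.IsIndSmooth.of_isLocalization (R := V) (B := W) P.primeCompl
    P.primeCompl_le_nonZeroDivisors
  convert hsmooth using 1
  exact RingHom.ext fun v => Subtype.ext (aeval_C _ v).symm
end

section
/- Let V' be a valuation ring and z ∈ V' a nonzero nonunit. Then: (a) the union q₁' of all prime ideals of V' not containing z is a prime ideal not containing z, hence the greatest prime ideal of V' not containing z (it corresponds to the maximal ideal of the localization of V' at the multiplicative set generated by z); (b) the radical of zV' is the smallest prime ideal q' of V' containing z; and (c) there is no prime ideal of V' strictly between q₁' and q' (i.e., height(q'/q₁') = 1). -/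
/-!
Divisibility stays total after localizing, so `V'` localized away from `z` is a local ring, and
the contraction of its maximal ideal is the largest prime avoiding `z`. Since the primes of `V'`
form a chain, the radical of `zV'`, being the intersection of the primes containing `z`, is prime.
A prime strictly between the two would have to either contain `z`, and then lie above the radical,
or avoid it, and then lie below `q₁`.
-/

universe u

namespace PreValuationRing

variable {R : Type*} [CommRing R] [PreValuationRing R]

theorem of_isLocalization (M : Submonoid R) (S : Type*) [CommRing S] [Algebra R S]
    [IsLocalization M S] : PreValuationRing S := by
  refine PreValuationRing.iff_dvd_total.mpr ⟨fun a b => ?_⟩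
  obtain ⟨⟨x, s⟩, hx⟩ := IsLocalization.surj M a
  obtain ⟨⟨y, t⟩, hy⟩ := IsLocalization.surj M b
  have hs := IsLocalization.map_units S s
  have ht := IsLocalization.map_units S t
  rcases ValuationRing.dvd_total x y with hxy | hyx
  · left
    have := map_dvd (algebraMap R S) hxy
    rwa [← hx, ← hy, hs.mul_right_dvd, ht.dvd_mul_right] at this
  · right
    have := map_dvd (algebraMap R S) hyx
    rwa [← hx, ← hy, ht.mul_right_dvd, hs.dvd_mul_right] at this

theorem isPrime_radical {I : Ideal R} (hI : I ≠ ⊤) : I.radical.IsPrime := by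
  rw [Ideal.radical_eq_sInf]
  obtain ⟨m, hm, hIm⟩ := Ideal.exists_le_maximal I hI
  exact Ideal.sInf_isPrime_of_isChain ⟨m, hIm, hm.isPrime⟩
    (fun a _ b _ _ => total_of (· ≤ ·) a b) fun _ hp => hp.2

end PreValuationRing

theorem IsLocalization.not_isUnit_algebraMap_of_mem {R : Type*} [CommRing R] (M : Submonoid R)
    (S : Type*) [CommRing S] [Algebra R S] [IsLocalization M S] {p : Ideal R}
    (hpM : Disjoint (M : Set R) p) {x : R} (hx : x ∈ p) : ¬IsUnit (algebraMap R S x) := by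
  rw [IsLocalization.algebraMap_isUnit_iff M]
  rintro ⟨m, hmM, hxm⟩
  exact Set.disjoint_left.mp hpM hmM (Ideal.mem_of_dvd _ hxm hx)

/-- Let `V'` be a valuation ring and `z ∈ V'` a nonzero nonunit.  Then (a) the
union `q₁'` of all primes of `V'` not containing `z` is a prime ideal not containing `z`, it is
the greatest prime not containing `z`, and it is the contraction of the maximal ideal of the
localization of `V'` away from `z`; (b) the radical of `zV'` is the smallest prime `q'`
containing `z`; (c) there is no prime of `V'` strictly between `q₁'` and `q'`. -/
theorem valuationRing_adjacent_primes_of_nonunit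
    (V' : Type u) [CommRing V'] [IsDomain V'] [ValuationRing V']
    (z : V') (hz0 : z ≠ 0) (hzu : ¬IsUnit z) :
    ∃ q₁ q' : Ideal V',
      ((q₁ : Set V') = ⋃ p ∈ {p : Ideal V' | p.IsPrime ∧ z ∉ p}, (p : Set V')) ∧
      q₁.IsPrime ∧ z ∉ q₁ ∧
      (∀ p : Ideal V', p.IsPrime → z ∉ p → p ≤ q₁) ∧
      (∀ x : V', x ∈ q₁ ↔ ¬IsUnit (algebraMap V' (Localization.Away z) x)) ∧
      q' = (Ideal.span {z}).radical ∧ q'.IsPrime ∧ z ∈ q' ∧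
      (∀ p : Ideal V', p.IsPrime → z ∈ p → q' ≤ p) ∧
      (∀ p : Ideal V', p.IsPrime → ¬(q₁ < p ∧ p < q')) := by
  let L := Localization.Away z
  have : IsDomain L := IsLocalization.Away.isDomain L hz0
  have : PreValuationRing L := .of_isLocalization (Submonoid.powers z) L
  set q₁ := (IsLocalRing.maximalIdeal L).comap (algebraMap V' L)
  have hzq₁ : z ∉ q₁ := not_not.mpr (IsLocalization.Away.algebraMap_isUnit z)
  have hq₁_greatest (p : Ideal V') (hp : p.IsPrime) (hzp : z ∉ p) : p ≤ q₁ := fun _ hx =>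
    IsLocalization.not_isUnit_algebraMap_of_mem (Submonoid.powers z) L
      ((Ideal.disjoint_powers_iff_notMem_of_isPrime z).mpr hzp) hx
  have hq'_least (p : Ideal V') (hp : p.IsPrime) (hzp : z ∈ p) : (Ideal.span {z}).radical ≤ p :=
    hp.radical_le_iff.mpr (Ideal.span_singleton_le_iff_mem p |>.mpr hzp)
  refine ⟨q₁, _, ?_, inferInstance, hzq₁, hq₁_greatest, fun _ => Iff.rfl, rfl,
    PreValuationRing.isPrime_radical (by rwa [Ne, Ideal.span_singleton_eq_top]),
    Ideal.le_radical (Ideal.mem_span_singleton_self z), hq'_least, ?_⟩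
  · refine subset_antisymm ?_ (Set.iUnion₂_subset fun p hp => hq₁_greatest p hp.1 hp.2)
    exact Set.subset_biUnion_of_mem (u := fun p : Ideal V' => (p : Set V'))
      (⟨inferInstance, hzq₁⟩ : q₁.IsPrime ∧ z ∉ q₁)
  · rintro p hp ⟨hq₁p, hpq'⟩
    by_cases hzp : z ∈ p
    · exact hpq'.not_ge (hq'_least p hp hzp)
    · exact hq₁p.not_ge (hq₁_greatest p hp hzp)
end

section
/- Let V ⊆ V' be an extension of valuation rings. For a prime ideal q' of V', let t_{q'} denote the transcendence degree of the fraction field of V'/q' over the fraction field of V/(q' ∩ V). Then for prime ideals q' ⊆ q'' of V' one has t_{q''} ≤ t_{q'}. -/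
/-!
Write `A = V/(q' ∩ V)`, `B = V/(q'' ∩ V)`, `D' = V'/q'` and `D'' = V'/q''`. The reduction
`D' → D''` extends to the localization `L` of `D'` at the elements with nonzero image in `D''`,
a subring of `Frac D'` mapping onto `Frac D''`. Lift a family of `Frac D''` that is algebraically
independent over `B` to `L`. A nontrivial relation among the lifts over `A` could be divided, `A`
being a valuation ring, by a coefficient dividing all the others; the new relation has a
coefficient `1`, so it reduces to a nontrivial relation over `B`, which is absurd. Hence
`trdeg_B Frac D'' ≤ trdeg_A Frac D'`, and transcendence degrees over a domain and over its
fraction field agree.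
-/

universe u v

/-- The transcendence degree of a commutative `R`-algebra `A`, as a cardinal: the supremum of the
cardinalities of the algebraically independent subsets of `A`. -/
noncomputable def trdegC (R A : Type*) [CommRing R] [CommRing A] [Algebra R A] : Cardinal :=
  ⨆ s : { s : Set A // AlgebraicIndependent R ((↑) : s → A) }, Cardinal.mk s.1
/-- The homomorphism of fraction fields induced by an injective homomorphism of domains. -/
noncomputable def fractionRingMap {A : Type u} {B : Type v} [CommRing A] [IsDomain A]
    [CommRing B] [IsDomain B] (g : A →+* B) (hg : Function.Injective g) :
    FractionRing A →+* FractionRing B :=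
  IsLocalization.map (M := nonZeroDivisors A) (T := nonZeroDivisors B)
    (Localization (nonZeroDivisors B)) g
    (fun x hx => mem_nonZeroDivisors_of_ne_zero (fun h =>
      mem_nonZeroDivisors_iff_ne_zero.mp hx (hg (by simpa using h))))

/-- For an extension `V ⊆ V'` and a prime `q'` of `V'`, the transcendence degree `t_{q'}` of the
fraction field of `V'/q'` over the fraction field of `V/(q' ∩ V)`. -/
noncomputable def quotTrdeg (V : Type u) (V' : Type v) [CommRing V] [IsDomain V] [CommRing V']
    [IsDomain V'] [Algebra V V'] (q' : Ideal V') (hq : q'.IsPrime) : Cardinal :=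
  letI := hq
  letI : (q'.comap (algebraMap V V')).IsPrime := hq.comap _
  letI := (fractionRingMap
    (Ideal.quotientMap q' (algebraMap V V') le_rfl) Ideal.quotientMap_injective).toAlgebra
  trdegC (FractionRing (V ⧸ q'.comap (algebraMap V V'))) (FractionRing (V' ⧸ q'))


open MvPolynomial in
theorem MvPolynomial.exists_eq_C_mul_of_coeff_eq_one {A σ : Type*} [CommRing A] [IsDomain A]
    [ValuationRing A] {p : MvPolynomial σ A} (hp : p ≠ 0) :
    ∃ (c : A) (q : MvPolynomial σ A) (m : σ →₀ ℕ), p = C c * q ∧ q.coeff m = 1 := by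
  classical
  -- the ideals of a valuation ring are totally ordered
  obtain ⟨m, hm, hmax⟩ := p.support.exists_max_image (fun m ↦ Ideal.span {p.coeff m})
    (support_nonempty.mpr hp)
  obtain ⟨q, hq⟩ : C (p.coeff m) ∣ p := by
    refine (C_dvd_iff_dvd_coeff _ _).mpr fun i ↦ ?_
    by_cases hi : i ∈ p.support
    · exact Ideal.span_singleton_le_span_singleton.mp (hmax i hi)
    · rw [notMem_support_iff.mp hi]
      exact dvd_zero _
  refine ⟨p.coeff m, q, m, hq, mul_left_cancel₀ (mem_support_iff.mp hm) ?_⟩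
  rw [mul_one, ← coeff_C_mul, ← hq]

open MvPolynomial in
theorem AlgebraicIndependent.of_comp_of_valuationRing {ι A B S T : Type*} [CommRing A]
    [IsDomain A] [ValuationRing A] [CommRing B] [Nontrivial B] [CommRing S] [IsDomain S]
    [Algebra A S] [CommRing T] [Algebra B T] (φ : A →+* B) (f : S →+* T)
    (hA : Function.Injective (algebraMap A S))
    (hf : f.comp (algebraMap A S) = (algebraMap B T).comp φ) {x : ι → S}
    (hx : AlgebraicIndependent B (f ∘ x)) : AlgebraicIndependent A x := by
  refine algebraicIndependent_iff.mpr fun p hp ↦ by_contra fun hp0 ↦ ?_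
  obtain ⟨c, q, m, rfl, hqm⟩ := exists_eq_C_mul_of_coeff_eq_one hp0
  have hc : c ≠ 0 := by rintro rfl; simp at hp0
  have hq : aeval x q = 0 := by
    rw [map_mul, aeval_C] at hp
    exact (mul_eq_zero.mp hp).resolve_left ((map_ne_zero_iff _ hA).mpr hc)
  have hφq : aeval (f ∘ x) (MvPolynomial.map φ q) = 0 := by
    rw [aeval_def, eval₂_map, ← hf, ← eval₂_comp_left, ← aeval_def, hq, map_zero]
  have hcoeff := congrArg (coeff m) (algebraicIndependent_iff.mp hx _ hφq)
  rw [coeff_map, hqm, map_one, coeff_zero] at hcoeff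
  exact one_ne_zero hcoeff

namespace Algebra

theorem trdeg_le_trdeg_of_injective_algebraMap (R K : Type*) {A : Type v} [CommRing R]
    [Nontrivial R] [CommRing K] [CommRing A] [Algebra R K] [Algebra K A] [Algebra R A]
    [IsScalarTower R K A] (hinj : Function.Injective (algebraMap R K)) :
    trdeg K A ≤ trdeg R A :=
  ciSup_le' fun s ↦ (s.2.restrictScalars hinj).cardinalMk_le_trdeg

theorem trdeg_le_trdeg_of_isAlgebraic (R K : Type*) {A : Type v} [CommRing R] [CommRing K]
    [NoZeroDivisors K] [Nontrivial K] [CommRing A] [Algebra R K] [Algebra K A] [Algebra R A]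
    [IsScalarTower R K A] [Algebra.IsAlgebraic R K] :
    trdeg R A ≤ trdeg K A :=
  ciSup_le' fun s ↦ (s.2.extendScalars K).cardinalMk_le_trdeg

theorem trdeg_le_of_surjective_of_valuationRing {A B : Type*} {S T : Type v} [CommRing A]
    [IsDomain A] [ValuationRing A] [CommRing B] [Nontrivial B] [CommRing S] [IsDomain S]
    [Algebra A S] [CommRing T] [Algebra B T] (φ : A →+* B) (f : S →+* T)
    (hA : Function.Injective (algebraMap A S)) (hf : Function.Surjective f)
    (hcomm : f.comp (algebraMap A S) = (algebraMap B T).comp φ) :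
    trdeg B T ≤ trdeg A S := by
  refine ciSup_le' fun s ↦ ?_
  choose x hx using fun i : s.1 ↦ hf i
  have hfx : AlgebraicIndependent B (f ∘ x) := by
    rw [show f ∘ x = (↑) from funext hx]
    exact s.2
  exact (hfx.of_comp_of_valuationRing φ f hA hcomm).cardinalMk_le_trdeg

end Algebra

noncomputable def fractionTrdeg {A : Type u} {B : Type v} [CommRing A] [IsDomain A]
    [CommRing B] [IsDomain B] (g : A →+* B) (hg : Function.Injective g) : Cardinal.{v} :=
  let := (fractionRingMap g hg).toAlgebra
  Algebra.trdeg (FractionRing A) (FractionRing B)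

theorem quotTrdeg_eq_fractionTrdeg (V : Type u) (V' : Type v) [CommRing V] [IsDomain V]
    [CommRing V'] [IsDomain V'] [Algebra V V'] (q : Ideal V') (hq : q.IsPrime) :
    quotTrdeg V V' q hq =
      fractionTrdeg (Ideal.quotientMap q (algebraMap V V') le_rfl) Ideal.quotientMap_injective :=
  rfl

theorem fractionRingMap_comp_algebraMap {A : Type u} {B : Type v} [CommRing A] [IsDomain A]
    [CommRing B] [IsDomain B] (g : A →+* B) (hg : Function.Injective g) :
    (fractionRingMap g hg).comp (algebraMap A (FractionRing A)) =
      (algebraMap B (FractionRing B)).comp g :=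
  IsLocalization.map_comp _

theorem fractionTrdeg_algebraMap {A : Type u} {B : Type v} [CommRing A] [IsDomain A]
    [CommRing B] [IsDomain B] [Algebra A B] (hg : Function.Injective (algebraMap A B)) :
    fractionTrdeg (algebraMap A B) hg = Algebra.trdeg A (FractionRing B) := by
  let := (fractionRingMap _ hg).toAlgebra
  have : IsScalarTower A (FractionRing A) (FractionRing B) :=
    .of_algebraMap_eq' (fractionRingMap_comp_algebraMap _ hg).symm
  have : Algebra.IsAlgebraic A (FractionRing A) := IsLocalization.isAlgebraic _ (nonZeroDivisors A)
  exact le_antisymm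
    (Algebra.trdeg_le_trdeg_of_injective_algebraMap A _ (IsFractionRing.injective _ _))
    (Algebra.trdeg_le_trdeg_of_isAlgebraic A (FractionRing A))

theorem fractionTrdeg_le_of_surjective {A B : Type*} {D' D'' : Type v} [CommRing A] [IsDomain A]
    [ValuationRing A] [CommRing B] [IsDomain B] [CommRing D'] [IsDomain D'] [CommRing D'']
    [IsDomain D''] (φ : A →+* B) (g' : A →+* D') (g'' : B →+* D'') (π : D' →+* D'')
    (hg' : Function.Injective g') (hg'' : Function.Injective g'')
    (hπ : Function.Surjective π) (hsq : π.comp g' = g''.comp φ) :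
    fractionTrdeg g'' hg'' ≤ fractionTrdeg g' hg' := by
  let := g'.toAlgebra
  let := g''.toAlgebra
  set M := (nonZeroDivisors D'').comap π
  have hM : M ≤ nonZeroDivisors D' := fun d hd ↦
    mem_nonZeroDivisors_of_ne_zero fun h ↦ by simp [M, h] at hd
  have : IsDomain (Localization M) := IsLocalization.isDomain_localization hM
  have : IsLocalization (M.map π) (FractionRing D'') := by
    rw [Submonoid.map_comap_eq_of_surjective hπ]
    infer_instance
  let r : Localization M →+* FractionRing D'' := IsLocalization.map _ π M.le_comap_map
  have hr : Function.Surjective r := IsLocalization.map_surjective_of_surjective _ _ _ hπ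
  have hrA :
      r.comp (algebraMap A (Localization M)) = (algebraMap B (FractionRing D'')).comp φ := by
    ext a
    show r (algebraMap D' _ (g' a)) = _
    exact (IsLocalization.map_eq _ _).trans congr(algebraMap D'' _ $(RingHom.congr_fun hsq a))
  let j : Localization M →ₐ[A] FractionRing D' :=
    IsLocalization.liftAlgHom (f := IsScalarTower.toAlgHom A D' (FractionRing D'))
      fun d ↦ IsLocalization.map_units _ (⟨d, hM d.2⟩ : nonZeroDivisors D')
  have hj : Function.Injective j := IsLocalization.lift_injective_iff _ |>.mpr fun x y ↦ by
    rw [(IsLocalization.injective _ hM).eq_iff]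
    exact (IsFractionRing.injective D' _).eq_iff.symm
  have hA : Function.Injective (algebraMap A (Localization M)) :=
    (IsLocalization.injective _ hM).comp hg'
  calc fractionTrdeg g'' hg'' = Algebra.trdeg B (FractionRing D'') := fractionTrdeg_algebraMap hg''
    _ ≤ Algebra.trdeg A (Localization M) :=
      Algebra.trdeg_le_of_surjective_of_valuationRing φ r hA hr hrA
    _ ≤ Algebra.trdeg A (FractionRing D') := trdeg_le_of_injective j hj
    _ = fractionTrdeg g' hg' := (fractionTrdeg_algebraMap hg').symm

theorem quotTrdeg_antitone_general
    (V : Type u) (V' : Type v) [CommRing V] [IsDomain V] [ValuationRing V]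
    [CommRing V'] [IsDomain V'] [Algebra V V']
    (q' q'' : Ideal V') (hq' : q'.IsPrime) (hq'' : q''.IsPrime) (hle : q' ≤ q'') :
    quotTrdeg V V' q'' hq'' ≤ quotTrdeg V V' q' hq' := by
  rw [quotTrdeg_eq_fractionTrdeg, quotTrdeg_eq_fractionTrdeg]
  have : ValuationRing (V ⧸ q'.comap (algebraMap V V')) :=
    Function.Surjective.valuationRing _ Ideal.Quotient.mk_surjective
  exact fractionTrdeg_le_of_surjective (Ideal.Quotient.factor (Ideal.comap_mono hle))
    (Ideal.quotientMap q' (algebraMap V V') le_rfl) (Ideal.quotientMap q'' (algebraMap V V') le_rfl)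
    (Ideal.Quotient.factor hle) Ideal.quotientMap_injective Ideal.quotientMap_injective
    (Ideal.Quotient.factor_surjective hle) (Ideal.Quotient.ringHom_ext rfl)

/-- For an extension `V ⊆ V'` of valuation rings and primes `q' ⊆ q''` of `V'`,
the transcendence degree `t_{q''}` of `Frac(V'/q'')` over `Frac(V/(q'' ∩ V))` is at most
`t_{q'}`. -/
theorem quotTrdeg_antitone
    (V : Type u) (V' : Type v) [CommRing V] [IsDomain V] [ValuationRing V]
    [CommRing V'] [IsDomain V'] [ValuationRing V'] [Algebra V V']
    (hinj : Function.Injective (algebraMap V V'))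
    [IsLocalHom (algebraMap V V')]
    (q' q'' : Ideal V') (hq' : q'.IsPrime) (hq'' : q''.IsPrime) (hle : q' ≤ q'') :
    quotTrdeg V V' q'' hq'' ≤ quotTrdeg V V' q' hq' :=
  quotTrdeg_antitone_general V V' q' q'' hq' hq'' hle
end
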